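/- arXiv:1706.00751 — 5 statements merged into one kernel-verified Lean document; each statement's English description precedes it below -/
import Mathlib

section
/- Fix m≥1 and set p = 1/2 + √(3^(1/m)-1)/(2√(3^(1/m)+3)). If Y₁,...,Y_m are independent normalized Rademacher variables each with success parameter p, then F = Y₁·...·Y_m satisfies E[F]=0, E[F²]=1 and E[F⁴]=3, yet F takes only finitely many values and hence is not normally distributed. -/
open MeasureTheory ProbabilityTheory

/-!
A normalized Rademacher variable `Y` with parameter `p` has mean `0`, variance `1` and fourth
moment `1 / (p q) - 3`. The chosen `p` satisfies `p q = 1 / (3 ^ (1 / m) + 3)`, which makes that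
fourth moment `3 ^ (1 / m)`. Independence turns the moments of `F = Y₁ ⋯ Y_m` into `m`-th powers
of these, namely `0`, `1` and `3`. But `F` takes at most `2 ^ m` values, so its law has atoms,
which the standard Gaussian does not.
-/

open Set in
lemma finite_range_fun_prod {ι α M : Type*} [Fintype ι] [CommMonoid M] {f : ι → α → M}
    (hf : ∀ i, (range (f i)).Finite) : (range fun a ↦ ∏ i, f i a).Finite :=
  ((Finite.pi hf).image fun v : ι → M ↦ ∏ i, v i).subset <| by
    rintro _ ⟨a, rfl⟩
    exact ⟨fun i ↦ f i a, fun i _ ↦ mem_range_self a, rfl⟩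

lemma MeasureTheory.Measure.map_ne_of_countable_range {α β : Type*} [MeasurableSpace α]
    [MeasurableSpace β] [MeasurableSingletonClass β] {μ : Measure α} [NeZero μ]
    {ν : Measure β} [NeZero ν] [NullSingletonClass ν] {F : α → β}
    (hF : (Set.range F).Countable) : μ.map F ≠ ν := by
  intro h
  by_cases hm : AEMeasurable F μ
  · have hν : ν (Set.range F) = μ Set.univ := by
      rw [← h, Measure.map_apply_of_aemeasurable hm hF.measurableSet, Set.preimage_range]
    exact NeZero.ne (μ Set.univ) (hν ▸ hF.measure_zero ν)
  · exact NeZero.ne ν (h ▸ Measure.map_of_not_aemeasurable hm)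

section TwoPoint

variable {Ω : Type*} [MeasurableSpace Ω] {μ : Measure Ω} {p : ℝ}

lemma integral_comp_of_eq_one_or_neg_one [IsProbabilityMeasure μ] {X : Ω → ℝ}
    (hX : Measurable X) (hval : ∀ ω, X ω = 1 ∨ X ω = -1) (hp : 0 ≤ p)
    (hP : μ {ω | X ω = 1} = ENNReal.ofReal p) (φ : ℝ → ℝ) :
    ∫ ω, φ (X ω) ∂μ = p * φ 1 + (1 - p) * φ (-1) := by
  set A := {ω | X ω = 1}
  have hA : MeasurableSet A := hX (measurableSet_singleton 1)
  have hsplit : ∀ ω, φ (X ω) = φ (-1) + A.indicator (fun _ ↦ φ 1 - φ (-1)) ω := by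
    intro ω
    rcases hval ω with h | h
    · simp [A, h]
    · norm_num [A, h]
  have hAp : μ.real A = p := by rw [measureReal_def, hP, ENNReal.toReal_ofReal hp]
  simp_rw [hsplit]
  rw [integral_add (integrable_const _) ((integrable_const _).indicator hA),
    integral_const, integral_indicator_const _ hA, hAp, probReal_univ]
  simp only [smul_eq_mul]
  ring

lemma integral_prod_comp_pow_of_eq_one_or_neg_one [IsProbabilityMeasure μ] {ι : Type*}
    [Fintype ι] {X : ι → Ω → ℝ} (hX : ∀ i, Measurable (X i))
    (hval : ∀ i ω, X i ω = 1 ∨ X i ω = -1) (hp : 0 ≤ p)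
    (hP : ∀ i, μ {ω | X i ω = 1} = ENNReal.ofReal p) (hindep : iIndepFun X μ)
    {g : ℝ → ℝ} (hg : Measurable g) (k : ℕ) :
    ∫ ω, (∏ i, g (X i ω)) ^ k ∂μ = (p * g 1 ^ k + (1 - p) * g (-1) ^ k) ^ Fintype.card ι := by
  simp_rw [← Finset.prod_pow]
  rw [hindep.integral_fun_prod_comp (f := fun _ x ↦ g x ^ k) (fun i ↦ (hX i).aemeasurable)
    (fun _ ↦ (hg.pow_const k).aestronglyMeasurable),
    Finset.prod_congr rfl fun i _ ↦
    integral_comp_of_eq_one_or_neg_one (hX i) (hval i) hp (hP i) fun x ↦ g x ^ k,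
    Finset.prod_const, Finset.card_univ]

end TwoPoint

section Normalized

noncomputable def normalizedRademacher (p q x : ℝ) : ℝ := (x - p + q) / (2 * √(p * q))

variable {p q : ℝ}

lemma measurable_normalizedRademacher (p q : ℝ) : Measurable (normalizedRademacher p q) := by
  unfold normalizedRademacher
  fun_prop

lemma normalizedRademacher_one (h : p + q = 1) : normalizedRademacher p q 1 = q / √(p * q) := by
  rw [normalizedRademacher, show 1 - p + q = 2 * q by linarith,
    mul_div_mul_left _ _ two_ne_zero]

lemma normalizedRademacher_neg_one (h : p + q = 1) :
    normalizedRademacher p q (-1) = -(p / √(p * q)) := by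
  rw [normalizedRademacher, show -1 - p + q = 2 * -p by linarith,
    mul_div_mul_left _ _ two_ne_zero, neg_div]

lemma normalizedRademacher_mean (h : p + q = 1) :
    p * normalizedRademacher p q 1 + q * normalizedRademacher p q (-1) = 0 := by
  rw [normalizedRademacher_one h, normalizedRademacher_neg_one h]
  ring

lemma normalizedRademacher_second_moment (hp : 0 < p) (hq : 0 < q) (h : p + q = 1) :
    p * normalizedRademacher p q 1 ^ 2 + q * normalizedRademacher p q (-1) ^ 2 = 1 := by
  have hs : √(p * q) ^ 2 = p * q := Real.sq_sqrt (by positivity)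
  rw [normalizedRademacher_one h, normalizedRademacher_neg_one h, neg_sq, div_pow, div_pow, hs]
  field_simp
  linear_combination h

lemma normalizedRademacher_fourth_moment (hp : 0 < p) (hq : 0 < q) (h : p + q = 1) :
    p * normalizedRademacher p q 1 ^ 4 + q * normalizedRademacher p q (-1) ^ 4 =
      (p * q)⁻¹ - 3 := by
  have hs : √(p * q) ^ 4 = (p * q) ^ 2 := by
    rw [show 4 = 2 * 2 by rfl, pow_mul, Real.sq_sqrt (by positivity)]
  rw [normalizedRademacher_one h, normalizedRademacher_neg_one h, Even.neg_pow (by decide),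
    div_pow, div_pow, hs]
  field_simp
  linear_combination ((p + q) ^ 2 + (p + q) + 1 - 3 * p * q) * h

end Normalized

lemma half_add_sqrt_div_mul_one_sub {t : ℝ} (ht : 1 ≤ t) :
    (1 / 2 + √(t - 1) / (2 * √(t + 3))) * (1 - (1 / 2 + √(t - 1) / (2 * √(t + 3)))) =
      (t + 3)⁻¹ := by
  have h₁ : √(t - 1) ^ 2 = t - 1 := Real.sq_sqrt (by linarith)
  have h₂ : √(t + 3) ^ 2 = t + 3 := Real.sq_sqrt (by linarith)
  have : √(t + 3) ≠ 0 := (Real.sqrt_pos.2 (by linarith)).ne'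
  field_simp
  linear_combination (-(t + 3)) * h₁ + (t - 1) * h₂

/-- With `p = 1/2 + √(3^(1/m)-1)/(2√(3^(1/m)+3))` and `Y₁,…,Y_m` independent
normalized Rademacher variables with success parameter `p`, the product `F = Y₁⋯Y_m`
satisfies `E[F]=0`, `E[F²]=1`, `E[F⁴]=3`, has finite range, and is not standard normal. -/
theorem stmt3 {Ω : Type*} [MeasurableSpace Ω] (μ : Measure Ω) [IsProbabilityMeasure μ]
    (m : ℕ) (hm : 1 ≤ m) (p q : ℝ)
    (hp : p = 1 / 2 + Real.sqrt ((3 : ℝ) ^ ((1 : ℝ) / m) - 1) /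
      (2 * Real.sqrt ((3 : ℝ) ^ ((1 : ℝ) / m) + 3)))
    (hq : q = 1 - p)
    (X : Fin m → Ω → ℝ) (hXmeas : ∀ i, Measurable (X i))
    (hval : ∀ i ω, X i ω = 1 ∨ X i ω = -1)
    (hP : ∀ i, μ {ω | X i ω = 1} = ENNReal.ofReal p)
    (hindep : iIndepFun X μ)
    (Y : Fin m → Ω → ℝ) (hY : ∀ i ω, Y i ω = (X i ω - p + q) / (2 * Real.sqrt (p * q)))
    (F : Ω → ℝ) (hF : ∀ ω, F ω = ∏ i, Y i ω) :
    (∫ ω, F ω ∂μ) = 0 ∧ (∫ ω, (F ω) ^ 2 ∂μ) = 1 ∧ (∫ ω, (F ω) ^ 4 ∂μ) = 3 ∧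
      (Set.range F).Finite ∧ μ.map F ≠ gaussianReal 0 1 := by
  set t : ℝ := (3 : ℝ) ^ ((1 : ℝ) / m)
  have ht : 1 ≤ t := Real.one_le_rpow (by norm_num) (by positivity)
  have hpq : p * q = (t + 3)⁻¹ := hq ▸ hp ▸ half_add_sqrt_div_mul_one_sub ht
  have hpq_pos : 0 < p * q := hpq ▸ inv_pos.2 (by linarith)
  have hp0 : 0 < p := by nlinarith
  have hq0 : 0 < q := by nlinarith
  have hsum : p + q = 1 := by linarith
  obtain rfl : F = fun ω ↦ ∏ i, normalizedRademacher p q (X i ω) :=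
    funext fun ω ↦ (hF ω).trans (Finset.prod_congr rfl fun i _ ↦ hY i ω)
  have hmoment := integral_prod_comp_pow_of_eq_one_or_neg_one hXmeas hval hp0.le hP hindep
    (measurable_normalizedRademacher p q)
  rw [← hq, Fintype.card_fin] at hmoment
  have hfin : (Set.range fun ω ↦ ∏ i, normalizedRademacher p q (X i ω)).Finite :=
    finite_range_fun_prod fun i ↦ ((Set.toFinite {1, -1}).image _).subset <|
      Set.range_subset_iff.2 fun ω ↦ Set.mem_image_of_mem _ (hval i ω)
  refine ⟨?_, ?_, ?_, hfin, ?_⟩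
  · simpa [normalizedRademacher_mean hsum, zero_pow (by omega : m ≠ 0)] using hmoment 1
  · rw [hmoment, normalizedRademacher_second_moment hp0 hq0 hsum, one_pow]
  · rw [hmoment, normalizedRademacher_fourth_moment hp0 hq0 hsum, hpq, inv_inv,
      add_sub_cancel_right]
    simp only [t, one_div]
    exact Real.rpow_inv_natCast_pow (by norm_num) (by omega)
  · have := nullSingletonClass_gaussianReal (μ := 0) one_ne_zero
    exact Measure.map_ne_of_countable_range hfin.countable
end

section
/- Let f:ℕ→ℝ with Σⱼ f(j)² = 1. Then (sup_k f(k)²)² ≤ Σⱼ f(j)⁴ ≤ sup_k f(k)². Consequently, if Y_j are independent centered variables with unit variance and common fourth moment λ≠3, and F=Σⱼf(j)Yⱼ, then sup_k f(k)² ≤ √(|E[F⁴]−3|)/√(|λ−3|). -/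
/-!
The two deterministic inequalities follow from `f k ^ 4 ≤ ∑' j, f j ^ 4` and
`f j ^ 4 ≤ (⨆ k, f k ^ 2) * f j ^ 2`.

For independent `A`, `B` with mean zero, `E[(A + B)⁴] = E[A⁴] + 6 E[A²] E[B²] + E[B⁴]`; by
induction the fourth moment of a finite sum `∑ j ∈ s, f j * Y j` is
`3 (∑ f j ²)² + (λ - 3) ∑ f j ⁴`. Fatou's lemma bounds the fourth moment of the whole series by
the same expression. Applied to the tails `∑_{j ≥ n} f j * Y j`, which are series of the same
kind, this bound shows that the partial sums converge to `F` in `L⁴`; hence their fourth moments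
converge to `E[F⁴]`, and `E[F⁴] = 3 + (λ - 3) ∑ f j ⁴`. Thus
`|E[F⁴] - 3| = |λ - 3| ∑ f j ⁴ ≥ |λ - 3| (⨆ k, f k ^ 2)²`.
-/

open MeasureTheory ProbabilityTheory Filter Topology
open scoped ENNReal

section SquareSummable

variable {ι : Type*} {f : ι → ℝ}

lemma summable_pow_four_of_summable_sq (hf : Summable fun j => f j ^ 2) :
    Summable fun j => f j ^ 4 :=
  .of_nonneg_of_le (fun j => by positivity)
    (fun j => show f j ^ 4 ≤ (∑' i, f i ^ 2) * f j ^ 2 by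
      nlinarith [hf.le_tsum j fun i _ => sq_nonneg (f i), sq_nonneg (f j)])
    (hf.mul_left _)

lemma sq_iSup_sq_le_tsum_pow_four (hf : Summable fun j => f j ^ 2) :
    (⨆ k, f k ^ 2) ^ 2 ≤ ∑' j, f j ^ 4 := by
  have hT₀ : 0 ≤ ∑' j, f j ^ 4 := tsum_nonneg fun j => by positivity
  rw [← Real.le_sqrt (Real.iSup_nonneg fun k => sq_nonneg _) hT₀]
  refine Real.iSup_le (fun k => Real.le_sqrt_of_sq_le ?_) (Real.sqrt_nonneg _)
  rw [← pow_mul]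
  exact (summable_pow_four_of_summable_sq hf).le_tsum k fun j _ => by positivity

lemma tsum_pow_four_le_iSup_sq_mul_tsum_sq (hf : Summable fun j => f j ^ 2) :
    ∑' j, f j ^ 4 ≤ (⨆ k, f k ^ 2) * ∑' j, f j ^ 2 := by
  have hbdd : BddAbove (Set.range fun k => f k ^ 2) :=
    ⟨∑' j, f j ^ 2, Set.forall_mem_range.mpr fun k => hf.le_tsum k fun j _ => sq_nonneg _⟩
  rw [← tsum_mul_left]
  refine (summable_pow_four_of_summable_sq hf).tsum_le_tsum (fun j => ?_) (hf.mul_left _)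
  rw [show f j ^ 4 = f j ^ 2 * f j ^ 2 by ring]
  exact mul_le_mul_of_nonneg_right (le_ciSup hbdd j) (sq_nonneg _)

end SquareSummable

section

variable {Ω : Type*} [MeasurableSpace Ω] {μ : Measure Ω}

section Moments

variable [IsProbabilityMeasure μ]

lemma MeasureTheory.MemLp.integrable_pow_of_le {X : Ω → ℝ} {n k : ℕ} (hX : MemLp X n μ)
    (hk : k ≤ n) : Integrable (fun ω => X ω ^ k) μ :=
  ((hX.mono_exponent (by exact_mod_cast hk)).integrable_norm_pow').mono'
    (hX.aestronglyMeasurable.pow k) (ae_of_all _ fun ω => (norm_pow (X ω) k).le)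

lemma ProbabilityTheory.IndepFun.integral_add_pow {A B : Ω → ℝ} {n : ℕ} (hAB : IndepFun A B μ)
    (hA : MemLp A n μ) (hB : MemLp B n μ) :
    ∫ ω, (A ω + B ω) ^ n ∂μ =
      ∑ k ∈ Finset.range (n + 1), (∫ ω, A ω ^ k ∂μ) * (∫ ω, B ω ^ (n - k) ∂μ) * n.choose k := by
  have hpow : ∀ k, IndepFun (fun ω => A ω ^ k) (fun ω => B ω ^ (n - k)) μ := fun k =>
    hAB.comp (measurable_id.pow_const k) (measurable_id.pow_const (n - k))
  simp_rw [add_pow]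
  rw [integral_finsetSum _ fun k hk =>
    (show Integrable (fun ω => A ω ^ k * B ω ^ (n - k)) μ from (hpow k).integrable_mul
      (hA.integrable_pow_of_le (Finset.mem_range_succ_iff.mp hk))
      (hB.integrable_pow_of_le (Nat.sub_le n k))).mul_const _]
  refine Finset.sum_congr rfl fun k _ => ?_
  rw [integral_mul_const, (hpow k).integral_fun_mul_eq_mul_integral (hA.aestronglyMeasurable.pow k)
    (hB.aestronglyMeasurable.pow (n - k))]

lemma ProbabilityTheory.IndepFun.integral_add_sq {A B : Ω → ℝ} (hAB : IndepFun A B μ)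
    (hA : MemLp A 2 μ) (hB : MemLp B 2 μ) (hB₀ : ∫ ω, B ω ∂μ = 0) :
    ∫ ω, (A ω + B ω) ^ 2 ∂μ = ∫ ω, A ω ^ 2 ∂μ + ∫ ω, B ω ^ 2 ∂μ := by
  rw [hAB.integral_add_pow (n := 2) (by exact_mod_cast hA) (by exact_mod_cast hB)]
  simp [Finset.sum_range_succ, hB₀, add_comm]

lemma ProbabilityTheory.IndepFun.integral_add_pow_four {A B : Ω → ℝ} (hAB : IndepFun A B μ)
    (hA : MemLp A 4 μ) (hB : MemLp B 4 μ) (hA₀ : ∫ ω, A ω ∂μ = 0) (hB₀ : ∫ ω, B ω ∂μ = 0) :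
    ∫ ω, (A ω + B ω) ^ 4 ∂μ =
      ∫ ω, A ω ^ 4 ∂μ + 6 * (∫ ω, A ω ^ 2 ∂μ) * (∫ ω, B ω ^ 2 ∂μ) + ∫ ω, B ω ^ 4 ∂μ := by
  rw [hAB.integral_add_pow (n := 4) (by exact_mod_cast hA) (by exact_mod_cast hB)]
  simp [Finset.sum_range_succ, Nat.choose, hA₀, hB₀, add_comm, add_left_comm, add_assoc,
    mul_comm, mul_assoc]

end Moments

lemma MeasureTheory.integral_le_of_tendsto_ae_of_tendsto_integral {G : ℕ → Ω → ℝ} {g : Ω → ℝ}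
    {c : ℝ} (hG : ∀ n, Integrable (G n) μ) (hG₀ : ∀ n, 0 ≤ᵐ[μ] G n) (hg : Integrable g μ)
    (hlim : ∀ᵐ ω ∂μ, Tendsto (fun n => G n ω) atTop (𝓝 (g ω)))
    (hc : Tendsto (fun n => ∫ ω, G n ω ∂μ) atTop (𝓝 c)) :
    ∫ ω, g ω ∂μ ≤ c := by
  have hg₀ : 0 ≤ᵐ[μ] g := by
    filter_upwards [hlim, ae_all_iff.mpr hG₀] with ω hω hω₀
    exact ge_of_tendsto' hω hω₀
  have hc₀ : 0 ≤ c := ge_of_tendsto' hc fun n => integral_nonneg_of_ae (hG₀ n)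
  rw [← ENNReal.ofReal_le_ofReal_iff hc₀, ofReal_integral_eq_lintegral_ofReal hg hg₀]
  calc ∫⁻ ω, ENNReal.ofReal (g ω) ∂μ
      = ∫⁻ ω, liminf (fun n => ENNReal.ofReal (G n ω)) atTop ∂μ := by
        refine lintegral_congr_ae ?_
        filter_upwards [hlim] with ω hω
        exact (ENNReal.tendsto_ofReal hω).liminf_eq.symm
    _ ≤ liminf (fun n => ∫⁻ ω, ENNReal.ofReal (G n ω) ∂μ) atTop :=
        lintegral_liminf_le' fun n => (hG n).aemeasurable.ennreal_ofReal
    _ = ENNReal.ofReal c := by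
        simp_rw [← ofReal_integral_eq_lintegral_ofReal (hG _) (hG₀ _)]
        exact (ENNReal.tendsto_ofReal hc).liminf_eq

lemma MeasureTheory.MemLp.norm_toLp_pow {E : Type*} [NormedAddCommGroup E] {X : Ω → E} {p : ℕ}
    (hp : p ≠ 0) (hX : MemLp X p μ) : ‖hX.toLp X‖ ^ p = ∫ ω, ‖X ω‖ ^ p ∂μ := by
  rw [Lp.norm_toLp, hX.eLpNorm_eq_integral_rpow_norm (by exact_mod_cast hp) (by simp)]
  simp only [ENNReal.toReal_natCast, Real.rpow_natCast]
  rw [ENNReal.toReal_ofReal (by positivity),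
    Real.rpow_inv_natCast_pow (integral_nonneg fun _ => by positivity) hp]

lemma MeasureTheory.tendsto_integral_norm_pow {E : Type*} [NormedAddCommGroup E] {p : ℕ}
    (hp : p ≠ 0) {X : ℕ → Ω → E} {Z : Ω → E} (hX : ∀ n, MemLp (X n) p μ) (hZ : MemLp Z p μ)
    (h : Tendsto (fun n => ∫ ω, ‖X n ω - Z ω‖ ^ p ∂μ) atTop (𝓝 0)) :
    Tendsto (fun n => ∫ ω, ‖X n ω‖ ^ p ∂μ) atTop (𝓝 (∫ ω, ‖Z ω‖ ^ p ∂μ)) := by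
  have : Fact (1 ≤ (p : ℝ≥0∞)) := ⟨by exact_mod_cast Nat.one_le_iff_ne_zero.mpr hp⟩
  have hdist : ∀ n, ‖(hX n).toLp (X n) - hZ.toLp Z‖
      = (∫ ω, ‖X n ω - Z ω‖ ^ p ∂μ) ^ (p⁻¹ : ℝ) := fun n => by
    rw [← MemLp.toLp_sub, ← MemLp.norm_toLp_pow hp,
      Real.pow_rpow_inv_natCast (norm_nonneg _) hp]
    rfl
  have hconv : Tendsto (fun n => (hX n).toLp (X n)) atTop (𝓝 (hZ.toLp Z)) := by
    rw [tendsto_iff_norm_sub_tendsto_zero]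
    simp_rw [hdist]
    simpa [hp] using h.rpow_const (Or.inr (inv_nonneg.mpr p.cast_nonneg))
  simpa only [MemLp.norm_toLp_pow hp] using hconv.norm.pow p

structure StdIndepSeq (μ : Measure Ω) (Y : ℕ → Ω → ℝ) (lam : ℝ) : Prop where
  measurable : ∀ j, Measurable (Y j)
  indep : iIndepFun Y μ
  memLp : ∀ j, MemLp (Y j) 4 μ
  integral_eq_zero : ∀ j, ∫ ω, Y j ω ∂μ = 0
  integral_sq : ∀ j, ∫ ω, Y j ω ^ 2 ∂μ = 1
  integral_pow_four : ∀ j, ∫ ω, Y j ω ^ 4 ∂μ = lam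

namespace StdIndepSeq

variable {Y : ℕ → Ω → ℝ} {lam : ℝ}

lemma shift (hY : StdIndepSeq μ Y lam) (n : ℕ) : StdIndepSeq μ (fun j => Y (j + n)) lam :=
  ⟨fun _ => hY.measurable _, hY.indep.precomp (add_left_injective n), fun _ => hY.memLp _,
    fun _ => hY.integral_eq_zero _, fun _ => hY.integral_sq _, fun _ => hY.integral_pow_four _⟩

lemma memLp_sum (hY : StdIndepSeq μ Y lam) (f : ℕ → ℝ) (s : Finset ℕ) :
    MemLp (fun ω => ∑ j ∈ s, f j * Y j ω) 4 μ :=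
  memLp_finsetSum s fun j _ => (hY.memLp j).const_mul (f j)

lemma indepFun_sum_of_notMem (hY : StdIndepSeq μ Y lam) (f : ℕ → ℝ) {s : Finset ℕ} {i : ℕ}
    (hi : i ∉ s) : IndepFun (fun ω => ∑ j ∈ s, f j * Y j ω) (fun ω => f i * Y i ω) μ := by
  have := (hY.indep.comp (fun j x => f j * x) fun j => measurable_const_mul (f j))
    |>.indepFun_finsetSum_of_notMem (fun j => (hY.measurable j).const_mul (f j)) hi
  simpa only [Finset.sum_fn, Function.comp_def] using this

variable [IsProbabilityMeasure μ]

lemma integral_sum_eq_zero (hY : StdIndepSeq μ Y lam) (f : ℕ → ℝ) (s : Finset ℕ) :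
    ∫ ω, ∑ j ∈ s, f j * Y j ω ∂μ = 0 := by
  rw [integral_finsetSum s fun j _ => ((hY.memLp j).integrable (by norm_num)).const_mul (f j)]
  simp [integral_const_mul, hY.integral_eq_zero]

lemma integral_sum_sq (hY : StdIndepSeq μ Y lam) (f : ℕ → ℝ) (s : Finset ℕ) :
    ∫ ω, (∑ j ∈ s, f j * Y j ω) ^ 2 ∂μ = ∑ j ∈ s, f j ^ 2 := by
  induction s using Finset.induction with
  | empty => simp
  | insert i s hi ih =>
    simp only [Finset.sum_insert hi, add_comm (f i * _)]
    rw [(hY.indepFun_sum_of_notMem f hi).integral_add_sq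
      ((hY.memLp_sum f s).mono_exponent (by norm_num))
      (((hY.memLp i).const_mul (f i)).mono_exponent (by norm_num))
      (by rw [integral_const_mul, hY.integral_eq_zero, mul_zero]), ih]
    simp only [mul_pow, integral_const_mul, hY.integral_sq, mul_one, add_comm]

lemma integral_sum_pow_four (hY : StdIndepSeq μ Y lam) (f : ℕ → ℝ) (s : Finset ℕ) :
    ∫ ω, (∑ j ∈ s, f j * Y j ω) ^ 4 ∂μ =
      3 * (∑ j ∈ s, f j ^ 2) ^ 2 + (lam - 3) * ∑ j ∈ s, f j ^ 4 := by
  induction s using Finset.induction with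
  | empty => simp
  | insert i s hi ih =>
    simp only [Finset.sum_insert hi, add_comm (f i * _)]
    rw [(hY.indepFun_sum_of_notMem f hi).integral_add_pow_four (hY.memLp_sum f s)
      ((hY.memLp i).const_mul (f i)) (hY.integral_sum_eq_zero f s)
      (by rw [integral_const_mul, hY.integral_eq_zero, mul_zero]), ih, hY.integral_sum_sq]
    simp only [mul_pow, integral_const_mul, hY.integral_sq, hY.integral_pow_four]
    ring

lemma tendsto_integral_sum_range_pow_four (hY : StdIndepSeq μ Y lam) {f : ℕ → ℝ}
    (hf : Summable fun j => f j ^ 2) :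
    Tendsto (fun n => ∫ ω, (∑ j ∈ Finset.range n, f j * Y j ω) ^ 4 ∂μ) atTop
      (𝓝 (3 * (∑' j, f j ^ 2) ^ 2 + (lam - 3) * ∑' j, f j ^ 4)) := by
  simp_rw [hY.integral_sum_pow_four]
  exact ((hf.hasSum.tendsto_sum_nat.pow 2).const_mul 3).add
    ((summable_pow_four_of_summable_sq hf).hasSum.tendsto_sum_nat.const_mul _)

lemma integral_pow_four_le_of_hasSum (hY : StdIndepSeq μ Y lam) {f : ℕ → ℝ}
    (hf : Summable fun j => f j ^ 2) {F : Ω → ℝ} (hF : MemLp F 4 μ)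
    (hsum : ∀ᵐ ω ∂μ, HasSum (fun j => f j * Y j ω) (F ω)) :
    ∫ ω, F ω ^ 4 ∂μ ≤ 3 * (∑' j, f j ^ 2) ^ 2 + (lam - 3) * ∑' j, f j ^ 4 :=
  integral_le_of_tendsto_ae_of_tendsto_integral
    (fun n => MemLp.integrable_pow_of_le (n := 4) (by exact_mod_cast hY.memLp_sum f _) le_rfl)
    (fun n => ae_of_all _ fun ω => by positivity)
    (MemLp.integrable_pow_of_le (n := 4) (by exact_mod_cast hF) le_rfl)
    (hsum.mono fun ω h => h.tendsto_sum_nat.pow 4) (hY.tendsto_integral_sum_range_pow_four hf)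

theorem integral_pow_four_of_hasSum (hY : StdIndepSeq μ Y lam) {f : ℕ → ℝ}
    (hf : Summable fun j => f j ^ 2) {F : Ω → ℝ} (hF : MemLp F 4 μ)
    (hsum : ∀ᵐ ω ∂μ, HasSum (fun j => f j * Y j ω) (F ω)) :
    ∫ ω, F ω ^ 4 ∂μ = 3 * (∑' j, f j ^ 2) ^ 2 + (lam - 3) * ∑' j, f j ^ 4 := by
  set A : ℕ → Ω → ℝ := fun n ω => ∑ j ∈ Finset.range n, f j * Y j ω
  have hnorm : ∀ x : ℝ, ‖x‖ ^ 4 = x ^ 4 := fun x => by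
    rw [Real.norm_eq_abs, pow_abs, abs_of_nonneg (by positivity)]
  have htail_bound : ∀ n, ∫ ω, (F ω - A n ω) ^ 4 ∂μ ≤
      3 * (∑' j, f (j + n) ^ 2) ^ 2 + (lam - 3) * ∑' j, f (j + n) ^ 4 := fun n => by
    have hsum_tail : ∀ᵐ ω ∂μ, HasSum (fun j => f (j + n) * Y (j + n) ω) (F ω - A n ω) :=
      hsum.mono fun ω h => (hasSum_nat_add_iff' n).mpr h
    exact (hY.shift n).integral_pow_four_le_of_hasSum
      ((summable_nat_add_iff n).mpr hf) (hF.sub (hY.memLp_sum f _)) hsum_tail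
  have htail : Tendsto (fun n => ∫ ω, (F ω - A n ω) ^ 4 ∂μ) atTop (𝓝 0) := by
    have hbound : Tendsto (fun n => 3 * (∑' j, f (j + n) ^ 2) ^ 2
        + (lam - 3) * ∑' j, f (j + n) ^ 4) atTop (𝓝 0) := by
      simpa using ((tendsto_sum_nat_add fun j => f j ^ 2).pow 2 |>.const_mul 3).add
        ((tendsto_sum_nat_add fun j => f j ^ 4).const_mul (lam - 3))
    exact tendsto_of_tendsto_of_tendsto_of_le_of_le tendsto_const_nhds hbound
      (fun n => integral_nonneg fun ω => by positivity) htail_bound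
  have hlim := tendsto_integral_norm_pow (p := 4) (X := A) (by norm_num)
    (fun n => by exact_mod_cast hY.memLp_sum f _) (by exact_mod_cast hF)
    (by simpa only [norm_sub_rev, hnorm] using htail)
  simp only [hnorm] at hlim
  exact tendsto_nhds_unique hlim (hY.tendsto_integral_sum_range_pow_four hf)

end StdIndepSeq

end

/-- For `f : ℕ → ℝ` with `Σⱼ f(j)² = 1` one has
`(sup_k f(k)²)² ≤ Σⱼ f(j)⁴ ≤ sup_k f(k)²`, and consequently, for independent centered
unit-variance variables with common fourth moment `λ ≠ 3` and `F = Σⱼ f(j)Yⱼ`,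
`sup_k f(k)² ≤ √(|E[F⁴]−3|)/√(|λ−3|)`. -/
theorem stmt5 {Ω : Type*} [MeasurableSpace Ω] (μ : Measure Ω) [IsProbabilityMeasure μ]
    (f : ℕ → ℝ) (hfsum : Summable (fun j => f j ^ 2)) (hf : ∑' j, f j ^ 2 = 1)
    (Y : ℕ → Ω → ℝ) (hYmeas : ∀ j, Measurable (Y j))
    (hindep : iIndepFun Y μ)
    (hL4 : ∀ j, MemLp (Y j) 4 μ)
    (hmean : ∀ j, ∫ ω, Y j ω ∂μ = 0)
    (hvar : ∀ j, ∫ ω, (Y j ω) ^ 2 ∂μ = 1)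
    (lam : ℝ) (h4 : ∀ j, ∫ ω, (Y j ω) ^ 4 ∂μ = lam) (hlam : lam ≠ 3)
    (F : Ω → ℝ) (hF : ∀ ω, F ω = ∑' j, f j * Y j ω)
    (hFae : ∀ᵐ ω ∂μ, Summable (fun j => f j * Y j ω))
    (hFL4 : MemLp F 4 μ) :
    (⨆ k, f k ^ 2) ^ 2 ≤ ∑' j, f j ^ 4 ∧ ∑' j, f j ^ 4 ≤ ⨆ k, f k ^ 2 ∧
      (⨆ k, f k ^ 2) ≤ Real.sqrt |(∫ ω, (F ω) ^ 4 ∂μ) - 3| / Real.sqrt |lam - 3| := by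
  have hY : StdIndepSeq μ Y lam := ⟨hYmeas, hindep, hL4, hmean, hvar, h4⟩
  have hsum : ∀ᵐ ω ∂μ, HasSum (fun j => f j * Y j ω) (F ω) :=
    hFae.mono fun ω h => hF ω ▸ h.hasSum
  have hmoment := hY.integral_pow_four_of_hasSum hfsum hFL4 hsum
  have hlower := sq_iSup_sq_le_tsum_pow_four hfsum
  have hupper := tsum_pow_four_le_iSup_sq_mul_tsum_sq hfsum
  rw [hf, mul_one] at hupper
  refine ⟨hlower, hupper, ?_⟩
  have hT₀ : 0 ≤ ∑' j, f j ^ 4 := tsum_nonneg fun j => by positivity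
  rw [hmoment, hf, show 3 * 1 ^ 2 + (lam - 3) * ∑' j, f j ^ 4 - 3 = (lam - 3) * ∑' j, f j ^ 4 by
    ring, abs_mul, abs_of_nonneg hT₀, Real.sqrt_mul (abs_nonneg _),
    mul_div_cancel_left₀ _ (Real.sqrt_ne_zero'.mpr (abs_pos.mpr (sub_ne_zero.mpr hlam)))]
  exact (Real.le_sqrt (Real.iSup_nonneg fun k => sq_nonneg _) hT₀).mpr hlower
end

section
/- For n≥2, the number of quadruples (I,J,K,L) of 2-element subsets of {1,...,n} satisfying IΔJ = KΔL equals C(n,2)² + 4(n−2)²·C(n,2) + 6·C(n,2)·C(n−2,2). -/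
open Finset
open scoped symmDiff

lemma card_symmDiff' (s t : Finset ℕ) :
    (s ∆ t).card = s.card + t.card - 2 * (s ∩ t).card := by
  have h := Finset.card_inter_add_card_union s t
  have h2 : s ∆ t = (s ∪ t) \ (s ∩ t) := by rw [symmDiff_eq_sup_sdiff_inf]; rfl
  rw [h2, card_sdiff_of_subset (by exact inter_subset_union)]; omega

-- N(∅)
lemma N0 (n : ℕ) :
    (((powersetCard 2 (range n)) ×ˢ (powersetCard 2 (range n))).filter
      (fun q => q.1 ∆ q.2 = (∅ : Finset ℕ))).card = n.choose 2 := by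
  have h : ((powersetCard 2 (range n)) ×ˢ (powersetCard 2 (range n))).filter
      (fun q => q.1 ∆ q.2 = (∅ : Finset ℕ)) =
      (powersetCard 2 (range n)).image (fun x => (x, x)) := by
    ext ⟨a, b⟩
    simp only [mem_filter, mem_product, mem_image, Prod.mk.injEq]
    constructor
    · rintro ⟨⟨ha, hb⟩, h⟩
      have : a = b := by
        have := symmDiff_eq_bot (a := a) (b := b)
        simp only [Finset.bot_eq_empty] at this
        exact this.mp h
      exact ⟨a, ha, rfl, this ▸ rfl⟩
    · rintro ⟨x, hx, rfl, rfl⟩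
      exact ⟨⟨hx, hx⟩, by simp [symmDiff_self]⟩
  rw [h, card_image_of_injective _ (fun x y h => (Prod.mk.injEq ..).mp h |>.1),
    card_powersetCard, card_range]

-- N(S) for |S| = 4
lemma N4 (n : ℕ) (S : Finset ℕ) (hSr : S ⊆ range n) (hS : S.card = 4) :
    (((powersetCard 2 (range n)) ×ˢ (powersetCard 2 (range n))).filter
      (fun q => q.1 ∆ q.2 = S)).card = 6 := by
  have : (((powersetCard 2 (range n)) ×ˢ (powersetCard 2 (range n))).filter
      (fun q => q.1 ∆ q.2 = S)).card = (powersetCard 2 S).card := by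
    apply Finset.card_bij (fun q _ => q.1)
    · rintro ⟨K, L⟩ hq
      simp only [mem_filter, mem_product, mem_powersetCard] at hq ⊢
      obtain ⟨⟨⟨hKr, hK⟩, ⟨hLr, hL⟩⟩, hd⟩ := hq
      have hcs := card_symmDiff' K L
      rw [hd, hS, hK, hL] at hcs
      have hint : (K ∩ L).card = 0 := by omega
      have hdis : Disjoint K L :=
        disjoint_iff_inter_eq_empty.mpr (card_eq_zero.mp hint)
      have hU : K ∪ L = S := by
        rw [← hd, hdis.symmDiff_eq_sup, sup_eq_union]
      exact ⟨hU ▸ subset_union_left, hK⟩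
    · rintro ⟨K, L⟩ hq ⟨K', L'⟩ hq' (h : K = K')
      simp only [mem_filter, mem_product, mem_powersetCard] at hq hq'
      obtain ⟨⟨⟨hKr, hK⟩, ⟨hLr, hL⟩⟩, hd⟩ := hq
      obtain ⟨⟨⟨hKr', hK'⟩, ⟨hLr', hL'⟩⟩, hd'⟩ := hq'
      subst h
      have : L = L' := by
        have h1 : K ∆ L = K ∆ L' := hd.trans hd'.symm
        exact symmDiff_right_injective K h1
      simp [this]
    · rintro K hK
      simp only [mem_powersetCard] at hK
      obtain ⟨hKS, hK2⟩ := hK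
      refine ⟨(K, S \ K), ?_, rfl⟩
      simp only [mem_filter, mem_product, mem_powersetCard]
      have hdis : Disjoint K (S \ K) := disjoint_sdiff
      refine ⟨⟨⟨hKS.trans hSr, hK2⟩, ⟨(sdiff_subset).trans hSr, ?_⟩⟩, ?_⟩
      · rw [card_sdiff_of_subset hKS, hS, hK2]
      · rw [hdis.symmDiff_eq_sup, sup_eq_union]
        exact union_sdiff_of_subset hKS
  rw [this, card_powersetCard, hS]; decide

lemma helper {K L : Finset ℕ} {a b c : ℕ} (hab : a ≠ b) (hac : a ≠ c) (hbc : b ≠ c)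
    (hK : K.card = 2) (hL : L.card = 2) (hd : K ∆ L = {a, b})
    (hcK : c ∈ K) (hcL : c ∈ L) (haK : a ∈ K) :
    K = {a, c} ∧ L = {b, c} := by
  have haL : a ∉ L := by
    intro h
    have : a ∉ K ∆ L := by simp [Finset.mem_symmDiff, haK, h]
    rw [hd] at this; simp at this
  have hKe : K = {a, c} := by
    refine (eq_of_subset_of_card_le ?_ ?_).symm
    · simp [insert_subset_iff, haK, hcK]
    · rw [hK, card_insert_of_notMem (by simp [hac]), card_singleton]
  have hbL : b ∈ L := by
    have hbm : b ∈ K ∆ L := hd ▸ (by simp)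
    rcases Finset.mem_symmDiff.mp hbm with ⟨h1, _⟩ | ⟨h1, _⟩
    · rw [hKe] at h1; simp at h1; rcases h1 with h | h
      · exact absurd h.symm hab
      · exact absurd h hbc
    · exact h1
  have hLe : L = {b, c} := by
    refine (eq_of_subset_of_card_le ?_ ?_).symm
    · simp [insert_subset_iff, hbL, hcL]
    · rw [hL, card_insert_of_notMem (by simp [hbc]), card_singleton]
  exact ⟨hKe, hLe⟩

lemma N2 (n : ℕ) (S : Finset ℕ) (hSr : S ⊆ range n) (hS : S.card = 2) :
    (((powersetCard 2 (range n)) ×ˢ (powersetCard 2 (range n))).filter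
      (fun q => q.1 ∆ q.2 = S)).card = 2 * (n - 2) := by
  obtain ⟨a, b, hab, rfl⟩ := Finset.card_eq_two.mp hS
  have haR : a ∈ range n := hSr (by simp)
  have hbR : b ∈ range n := hSr (by simp)
  have key : (({a, b} : Finset ℕ) ×ˢ (range n \ {a, b})).card =
      (((powersetCard 2 (range n)) ×ˢ (powersetCard 2 (range n))).filter
        (fun q => q.1 ∆ q.2 = ({a, b} : Finset ℕ))).card := by
    apply Finset.card_bij (fun p _ => (insert p.1 {p.2}, insert p.2 (({a, b} : Finset ℕ).erase p.1)))
    · rintro ⟨x, c⟩ hm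
      simp only [mem_product, mem_sdiff, mem_range, mem_insert, mem_singleton] at hm
      obtain ⟨hx, hcR, hcS⟩ := hm
      push_neg at hcS
      obtain ⟨hca, hcb⟩ := hcS
      simp only [mem_filter, mem_product, mem_powersetCard]
      rcases hx with rfl | rfl
      · have he : ({x, b} : Finset ℕ).erase x = {b} := by
          rw [Finset.erase_insert (by simp [hab])]
        refine ⟨⟨⟨?_, ?_⟩, ?_, ?_⟩, ?_⟩
        · intro u hu; simp at hu; rcases hu with rfl | rfl
          · simpa using haR
          · simpa using hcR
        · rw [card_insert_of_notMem (by simp [Ne.symm hca]), card_singleton]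
        · rw [he]; intro u hu; simp at hu; rcases hu with rfl | rfl
          · simpa using hcR
          · simpa using hbR
        · rw [he, card_insert_of_notMem (by simp [hcb]), card_singleton]
        · rw [he]; ext u
          simp only [Finset.mem_symmDiff, mem_insert, mem_singleton]
          omega
      · have he : ({a, x} : Finset ℕ).erase x = {a} := by
          rw [Finset.pair_comm, Finset.erase_insert (by simp [Ne.symm hab])]
        refine ⟨⟨⟨?_, ?_⟩, ?_, ?_⟩, ?_⟩
        · intro u hu; simp at hu; rcases hu with rfl | rfl
          · simpa using hbR
          · simpa using hcR
        · rw [card_insert_of_notMem (by simp [Ne.symm hcb]), card_singleton]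
        · rw [he]; intro u hu; simp at hu; rcases hu with rfl | rfl
          · simpa using hcR
          · simpa using haR
        · rw [he, card_insert_of_notMem (by simp [hca]), card_singleton]
        · rw [he]; ext u
          simp only [Finset.mem_symmDiff, mem_insert, mem_singleton]
          omega
    · rintro ⟨x, c⟩ hm ⟨x', c'⟩ hm' h
      simp only [mem_product, mem_sdiff, mem_range, mem_insert, mem_singleton] at hm hm'
      obtain ⟨hx, hcR, hcS⟩ := hm
      obtain ⟨hx', hcR', hcS'⟩ := hm'
      push_neg at hcS hcS'
      have h1 : (insert x {c} : Finset ℕ) = insert x' {c'} := congrArg Prod.fst h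
      have hxx : x = x' := by
        have : x ∈ (insert x' {c'} : Finset ℕ) := h1 ▸ (by simp)
        simp at this
        rcases this with h2 | h2
        · exact h2
        · subst h2; rcases hx with rfl | rfl
          · exact absurd rfl hcS'.1
          · exact absurd rfl hcS'.2
      have hcc : c = c' := by
        have : c ∈ (insert x' {c'} : Finset ℕ) := h1 ▸ (by simp)
        simp at this
        rcases this with h2 | h2
        · subst h2; rcases hx' with rfl | rfl
          · exact absurd rfl hcS.1
          · exact absurd rfl hcS.2
        · exact h2
      simp [hxx, hcc]
    · rintro ⟨K, L⟩ hq
      simp only [mem_filter, mem_product, mem_powersetCard] at hq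
      obtain ⟨⟨⟨hKr, hK⟩, ⟨hLr, hL⟩⟩, hd⟩ := hq
      have hcs := card_symmDiff' K L
      rw [hd, hK, hL, hS] at hcs
      have hle : (K ∩ L).card ≤ 2 := hK ▸ card_le_card inter_subset_left
      have hint : (K ∩ L).card = 1 := by omega
      obtain ⟨c, hc⟩ := card_eq_one.mp hint
      have hcK : c ∈ K := by
        have : c ∈ K ∩ L := hc ▸ mem_singleton_self c
        exact mem_of_mem_inter_left this
      have hcL : c ∈ L := by
        have : c ∈ K ∩ L := hc ▸ mem_singleton_self c
        exact mem_of_mem_inter_right this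
      have hcn : c ∉ K ∆ L := by simp [Finset.mem_symmDiff, hcK, hcL]
      rw [hd] at hcn
      simp only [mem_insert, mem_singleton] at hcn
      push_neg at hcn
      obtain ⟨hca, hcb⟩ := hcn
      have ham : a ∈ K ∆ L := hd ▸ (by simp)
      have hcR : c ∈ range n := hKr hcK
      rcases Finset.mem_symmDiff.mp ham with ⟨haK, haL⟩ | ⟨haL, haK⟩
      · obtain ⟨hKe, hLe⟩ := helper hab (Ne.symm hca) (Ne.symm hcb) hK hL hd hcK hcL haK
        refine ⟨(a, c), ?_, ?_⟩
        · simp [hcR, hca, hcb]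
        · have he : ({a, b} : Finset ℕ).erase a = {b} := by
            rw [Finset.erase_insert (by simp [hab])]
          rw [he]
          simp only [Prod.mk.injEq]
          constructor
          · rw [hKe]
          · rw [hLe, Finset.pair_comm]
      · obtain ⟨hLe, hKe⟩ := helper hab (Ne.symm hca) (Ne.symm hcb) hL hK (symmDiff_comm K L ▸ hd) hcL hcK haL
        refine ⟨(b, c), ?_, ?_⟩
        · simp [hcR, hca, hcb]
        · have he : ({a, b} : Finset ℕ).erase b = {a} := by
            rw [Finset.pair_comm, Finset.erase_insert (by simp [Ne.symm hab])]
          rw [he]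
          simp only [Prod.mk.injEq]
          constructor
          · rw [hKe]
          · rw [hLe, Finset.pair_comm]
  rw [← key, card_product, card_sdiff_of_subset (by intro u hu; simp at hu; rcases hu with rfl | rfl <;> assumption),
    card_range]
  rw [card_insert_of_notMem (by simp [hab]), card_singleton]

lemma choose_id (n : ℕ) (hn : 2 ≤ n) :
    n.choose 2 = (n - 2).choose 2 + 2 * (n - 2) + 1 := by
  obtain ⟨m, rfl⟩ : ∃ m, n = m + 2 := ⟨n - 2, by omega⟩
  simp only [Nat.add_sub_cancel, Nat.choose_two_right]
  have h1 : (m + 2) * (m + 2 - 1) = m * (m - 1) + 2 * (2 * m + 1) := by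
    cases m with
    | zero => rfl
    | succ k =>
      simp only [Nat.add_sub_cancel, Nat.succ_sub_one]
      ring
  omega

/-- For `n ≥ 2`, the number of quadruples `(I,J,K,L)` of 2-element subsets
of `{1,…,n}` with `IΔJ = KΔL` equals `C(n,2)² + 4(n−2)²C(n,2) + 6·C(n,2)·C(n−2,2)`. -/
theorem stmt7 (n : ℕ) (hn : 2 ≤ n) :
    (((Finset.powersetCard 2 (Finset.range n)) ×ˢ (Finset.powersetCard 2 (Finset.range n)) ×ˢ
        (Finset.powersetCard 2 (Finset.range n)) ×ˢ (Finset.powersetCard 2 (Finset.range n))).filter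
      (fun q => q.1 ∆ q.2.1 = q.2.2.1 ∆ q.2.2.2)).card =
      n.choose 2 ^ 2 + 4 * (n - 2) ^ 2 * n.choose 2 + 6 * n.choose 2 * (n - 2).choose 2 := by
  set P := powersetCard 2 (range n) with hP
  have step1 : (((P ×ˢ P ×ˢ P ×ˢ P).filter
      (fun q => q.1 ∆ q.2.1 = q.2.2.1 ∆ q.2.2.2)).card : ℕ) =
      ∑ I ∈ P, ∑ J ∈ P, ((P ×ˢ P).filter (fun z => z.1 ∆ z.2 = I ∆ J)).card := by
    rw [card_filter, Finset.sum_product, ]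
    refine Finset.sum_congr rfl (fun I _ => ?_)
    rw [Finset.sum_product]
    refine Finset.sum_congr rfl (fun J _ => ?_)
    rw [card_filter]
    exact Finset.sum_congr rfl (fun z _ => if_congr eq_comm rfl rfl)
  rw [step1]
  have inner : ∀ I ∈ P, (∑ J ∈ P, ((P ×ˢ P).filter (fun z => z.1 ∆ z.2 = I ∆ J)).card) =
      n.choose 2 + 6 * (n - 2).choose 2 + (2 * (n - 2)) * (2 * (n - 2)) := by
    intro I hI
    rw [hP, mem_powersetCard] at hI
    obtain ⟨hIr, hI2⟩ := hI
    have hval : ∀ J ∈ P, ((P ×ˢ P).filter (fun z => z.1 ∆ z.2 = I ∆ J)).card =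
        if J = I then n.choose 2 else if Disjoint I J then 6 else 2 * (n - 2) := by
      intro J hJ
      rw [hP, mem_powersetCard] at hJ
      obtain ⟨hJr, hJ2⟩ := hJ
      have hsub : I ∆ J ⊆ range n := by
        intro u hu
        rcases Finset.mem_symmDiff.mp hu with ⟨h, _⟩ | ⟨h, _⟩
        · exact hIr h
        · exact hJr h
      by_cases hJI : J = I
      · subst hJI
        rw [if_pos rfl, symmDiff_self]
        exact N0 n
      · rw [if_neg hJI]
        by_cases hdis : Disjoint I J
        · rw [if_pos hdis]
          apply N4 n _ hsub
          rw [card_symmDiff' I J, hI2, hJ2, disjoint_iff_inter_eq_empty.mp hdis]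
          simp
        · rw [if_neg hdis]
          apply N2 n _ hsub
          have h1 : 1 ≤ (I ∩ J).card := by
            rcases Finset.not_disjoint_iff.mp hdis with ⟨u, hu1, hu2⟩
            exact card_pos.mpr ⟨u, mem_inter.mpr ⟨hu1, hu2⟩⟩
          have h2 : (I ∩ J).card ≤ 2 := hI2 ▸ card_le_card inter_subset_left
          have h3 : (I ∩ J).card ≠ 2 := by
            intro hc
            have hII : I ∩ J = I :=
              eq_of_subset_of_card_le inter_subset_left (by omega)
            have hJJ : I ∩ J = J :=
              eq_of_subset_of_card_le inter_subset_right (by omega)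
            exact hJI (hJJ.symm.trans hII)
          rw [card_symmDiff' I J, hI2, hJ2]
          omega
    rw [Finset.sum_congr rfl hval]
    rw [← Finset.sum_filter_add_sum_filter_not P (fun J => J = I)]
    have hfe : P.filter (fun J => J = I) = {I} := by
      rw [Finset.filter_eq']
      rw [if_pos (by rw [hP, mem_powersetCard]; exact ⟨hIr, hI2⟩)]
    rw [hfe, Finset.sum_singleton, if_pos rfl]
    have hrest : ∀ J ∈ P.filter (fun J => ¬ J = I),
        (if J = I then n.choose 2 else if Disjoint I J then 6 else 2 * (n - 2)) =
        (if Disjoint I J then 6 else 2 * (n - 2)) := by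
      intro J hJ
      rw [if_neg (mem_filter.mp hJ).2]
    rw [Finset.sum_congr rfl hrest]
    rw [← Finset.sum_filter_add_sum_filter_not (P.filter (fun J => ¬ J = I)) (fun J => Disjoint I J)]
    have hsumA : ∑ x ∈ (P.filter (fun J => ¬ J = I)).filter (fun x => Disjoint I x),
        (if Disjoint I x then 6 else 2 * (n - 2)) =
        ((P.filter (fun J => ¬ J = I)).filter (fun x => Disjoint I x)).card * 6 := by
      rw [Finset.sum_congr rfl (fun x hx => if_pos (mem_filter.mp hx).2), Finset.sum_const,
        smul_eq_mul]
    have hsumB : ∑ x ∈ (P.filter (fun J => ¬ J = I)).filter (fun x => ¬ Disjoint I x),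
        (if Disjoint I x then 6 else 2 * (n - 2)) =
        ((P.filter (fun J => ¬ J = I)).filter (fun x => ¬ Disjoint I x)).card * (2 * (n - 2)) := by
      rw [Finset.sum_congr rfl (fun x hx => if_neg (mem_filter.mp hx).2), Finset.sum_const,
        smul_eq_mul]
    rw [hsumA, hsumB]
    have hA : (P.filter (fun J => ¬ J = I)).filter (fun x => Disjoint I x) =
        powersetCard 2 (range n \ I) := by
      ext J
      simp only [mem_filter, hP, mem_powersetCard, subset_sdiff]
      constructor
      · rintro ⟨⟨⟨hJr, hJ2⟩, -⟩, hdis⟩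
        exact ⟨⟨hJr, hdis.symm⟩, hJ2⟩
      · rintro ⟨⟨hJr, hdis⟩, hJ2⟩
        refine ⟨⟨⟨hJr, hJ2⟩, ?_⟩, hdis.symm⟩
        rintro rfl
        have : J = ∅ := disjoint_self.mp hdis.symm
        rw [this] at hJ2; simp at hJ2
    have hcardA : ((P.filter (fun J => ¬ J = I)).filter (fun x => Disjoint I x)).card =
        (n - 2).choose 2 := by
      rw [hA, card_powersetCard, card_sdiff_of_subset hIr, card_range, hI2]
    have hcardP : P.card = n.choose 2 := by rw [hP, card_powersetCard, card_range]
    have hpart1 : (P.filter (fun J => J = I)).card + (P.filter (fun J => ¬ J = I)).card = P.card :=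
      Finset.card_filter_add_card_filter_not _
    have hpart2 : ((P.filter (fun J => ¬ J = I)).filter (fun x => Disjoint I x)).card +
        ((P.filter (fun J => ¬ J = I)).filter (fun x => ¬ Disjoint I x)).card =
        (P.filter (fun J => ¬ J = I)).card :=
      Finset.card_filter_add_card_filter_not _
    rw [hfe] at hpart1
    simp only [card_singleton] at hpart1
    have hcardB : ((P.filter (fun J => ¬ J = I)).filter (fun x => ¬ Disjoint I x)).card =
        2 * (n - 2) := by
      have := choose_id n hn
      omega
    rw [hcardA, hcardB]
    ring
  rw [Finset.sum_congr rfl inner, Finset.sum_const, smul_eq_mul]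
  have hcardP : P.card = n.choose 2 := by rw [hP, card_powersetCard, card_range]
  rw [hcardP]
  ring
end

section
/- Let X₁,...,X_n be independent symmetric random signs, n≥4, and m=2. There exist coefficients (a_J), indexed by 2-element subsets J of {1,...,n}, with Σ_J a_J² = 1, such that F = Σ_J a_J·Π_{i∈J}X_i satisfies E[F²]=1 and E[F⁴]=3; F takes only finitely many values and hence is not Gaussian. -/
open MeasureTheory ProbabilityTheory Finset

/-! The witness puts weights `s, s, t, t` on the edges `01, 12, 23, 30` of a 4-cycle, so that
`F = (s X₁ + t X₃)(X₀ + X₂)` is a product of two independent factors and its moments factor.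
The factor `V = X₀ + X₂` has `E[V⁴] = 2 E[V²]²`, while `U = s X₁ + t X₃` has
`E[U⁴] = (s² + t²)² + 4 s²t²`; choosing `s² + t² = 1/2` and `s²t² = 1/32` makes
`E[U⁴] = (3/2) E[U²]²`, hence `E[F²] = 1` and `E[F⁴] = 3`. Having finitely many values, `F`
charges a Lebesgue-null set with full mass and so cannot be Gaussian. -/

section PairCoeff

variable {ι R : Type*} [DecidableEq ι] [CommSemiring R]

def pairCoeff (P Q : Finset ι) (u v : ι → R) (J : Finset ι) : R :=
  ∑ i ∈ P, ∑ j ∈ Q, if J = {i, j} then u i * v j else 0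

variable {P Q : Finset ι} (u v : ι → R)

lemma sum_powersetCard_two_pairCoeff_mul [Fintype ι] (hPQ : Disjoint P Q) (g : Finset ι → R) :
    ∑ J ∈ powersetCard 2 univ, pairCoeff P Q u v J * g J
      = ∑ i ∈ P, ∑ j ∈ Q, u i * v j * g {i, j} := by
  simp only [pairCoeff, sum_mul, ite_mul, zero_mul]
  rw [sum_comm]
  refine sum_congr rfl fun i hi => ?_
  rw [sum_comm]
  refine sum_congr rfl fun j hj => ?_
  have hij : i ≠ j := ne_of_mem_of_not_mem hi (disjoint_right.mp hPQ hj)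
  rw [sum_ite_eq', if_pos (mem_powersetCard_univ.mpr (card_pair hij))]

lemma pairCoeff_pair (hPQ : Disjoint P Q) {i j : ι} (hi : i ∈ P) (hj : j ∈ Q) :
    pairCoeff P Q u v {i, j} = u i * v j := by
  have key : ∀ i' ∈ P, ∀ j' ∈ Q, ({i, j} : Finset ι) = {i', j'} ↔ i' = i ∧ j' = j := by
    intro i' hi' j' hj'
    refine ⟨fun h => ?_, by rintro ⟨rfl, rfl⟩; rfl⟩
    have hi'' : i ∈ ({i', j'} : Finset ι) := h ▸ mem_insert_self i {j}
    have hj'' : j ∈ ({i', j'} : Finset ι) := h ▸ mem_insert_of_mem (mem_singleton_self j)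
    simp only [mem_insert, mem_singleton] at hi'' hj''
    have := disjoint_left.mp hPQ
    grind
  rw [pairCoeff, sum_eq_single_of_mem i hi fun i' hi' hne =>
      sum_eq_zero fun j' hj' => if_neg fun h => hne ((key i' hi' j' hj').mp h).1,
    sum_eq_single_of_mem j hj fun j' hj' hne => if_neg fun h => hne ((key i hi j' hj').mp h).2,
    if_pos rfl]

lemma sum_powersetCard_two_pairCoeff_sq [Fintype ι] (hPQ : Disjoint P Q) :
    ∑ J ∈ powersetCard 2 univ, pairCoeff P Q u v J ^ 2
      = (∑ i ∈ P, u i ^ 2) * ∑ j ∈ Q, v j ^ 2 := by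
  simp_rw [sq, sum_powersetCard_two_pairCoeff_mul u v hPQ, sum_mul_sum]
  refine sum_congr rfl fun i hi => sum_congr rfl fun j hj => ?_
  rw [pairCoeff_pair u v hPQ hi hj]
  ring

lemma sum_powersetCard_two_pairCoeff_mul_prod [Fintype ι] (hPQ : Disjoint P Q) (x : ι → R) :
    ∑ J ∈ powersetCard 2 univ, pairCoeff P Q u v J * ∏ k ∈ J, x k
      = (∑ i ∈ P, u i * x i) * ∑ j ∈ Q, v j * x j := by
  rw [sum_powersetCard_two_pairCoeff_mul u v hPQ, sum_mul_sum]
  refine sum_congr rfl fun i hi => sum_congr rfl fun j hj => ?_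
  rw [prod_pair (ne_of_mem_of_not_mem hi (disjoint_right.mp hPQ hj))]
  ring

def cycleCoeff (e : Fin 4 ↪ ι) (s t : R) : Finset ι → R :=
  pairCoeff {e 1, e 3} {e 0, e 2} (fun k => if k = e 1 then s else t) 1

variable (e : Fin 4 ↪ ι) (s t : R)

lemma disjoint_cycle_parts : Disjoint ({e 1, e 3} : Finset ι) {e 0, e 2} := by
  simp [e.injective.eq_iff]

lemma sum_cycle_part_mul (x : ι → R) :
    ∑ k ∈ {e 1, e 3}, (if k = e 1 then s else t) * x k = s * x (e 1) + t * x (e 3) := by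
  rw [sum_pair (e.injective.ne (by decide)), if_pos rfl, if_neg (e.injective.ne (by decide))]

lemma sum_cycle_part_one_mul (x : ι → R) :
    ∑ k ∈ {e 0, e 2}, (1 : ι → R) k * x k = x (e 0) + x (e 2) := by
  simp only [Pi.one_apply, one_mul, sum_pair (e.injective.ne (by decide) : e 0 ≠ e 2)]

lemma sum_powersetCard_two_cycleCoeff_sq [Fintype ι] :
    ∑ J ∈ powersetCard 2 univ, cycleCoeff e s t J ^ 2 = 2 * (s ^ 2 + t ^ 2) := by
  rw [cycleCoeff, sum_powersetCard_two_pairCoeff_sq _ _ (disjoint_cycle_parts e)]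
  simp only [sq]
  rw [sum_cycle_part_mul, sum_cycle_part_one_mul, if_pos rfl,
    if_neg (e.injective.ne (by decide)), Pi.one_apply, Pi.one_apply]
  ring

lemma sum_powersetCard_two_cycleCoeff_mul_prod [Fintype ι] (x : ι → R) :
    ∑ J ∈ powersetCard 2 univ, cycleCoeff e s t J * ∏ k ∈ J, x k
      = (s * x (e 1) + t * x (e 3)) * (x (e 0) + x (e 2)) := by
  rw [cycleCoeff, sum_powersetCard_two_pairCoeff_mul_prod _ _ (disjoint_cycle_parts e),
    sum_cycle_part_mul, sum_cycle_part_one_mul]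

end PairCoeff

section Signs

variable {Ω : Type*} [MeasurableSpace Ω] {μ : Measure Ω} {ε η : Ω → ℝ}

lemma integrable_of_sign [IsFiniteMeasure μ] (hm : Measurable ε)
    (hε : ∀ ω, ε ω = 1 ∨ ε ω = -1) : Integrable ε μ :=
  Integrable.of_bound hm.aestronglyMeasurable 1 <| .of_forall fun ω => by
    rcases hε ω with h | h <;> simp [h]

lemma integral_eq_zero_of_sign [IsProbabilityMeasure μ] (hm : Measurable ε)
    (hε : ∀ ω, ε ω = 1 ∨ ε ω = -1) (hP : μ {ω | ε ω = 1} = 1 / 2) : ∫ ω, ε ω ∂μ = 0 := by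
  set A := {ω | ε ω = 1}
  have hA : MeasurableSet A := hm (measurableSet_singleton 1)
  have hεA : ∀ ω, ε ω = A.indicator (fun _ => 2) ω - 1 := fun ω => by
    rcases hε ω with h | h <;> norm_num [A, Set.indicator, h]
  simp_rw [hεA]
  rw [integral_sub ((integrable_const 2).indicator hA) (integrable_const 1),
    integral_indicator_const _ hA]
  norm_num [measureReal_def, hP]

lemma integral_const_add_mul_mul_of_indepFun [IsProbabilityMeasure μ] (hind : IndepFun ε η μ)
    (hεm : Measurable ε) (hηm : Measurable η) (hε : ∀ ω, ε ω = 1 ∨ ε ω = -1)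
    (hη : ∀ ω, η ω = 1 ∨ η ω = -1) (hε0 : ∫ ω, ε ω ∂μ = 0) (c d : ℝ) :
    ∫ ω, (c + d * (ε ω * η ω)) ∂μ = c := by
  have hεη : ∀ ω, ε ω * η ω = 1 ∨ ε ω * η ω = -1 := fun ω => by
    rcases hε ω with h | h <;> rcases hη ω with h' | h' <;> simp [h, h']
  have hmean : ∫ ω, ε ω * η ω ∂μ = 0 := by
    rw [← Pi.mul_def, hind.integral_mul_eq_mul_integral hεm.aestronglyMeasurable
      hηm.aestronglyMeasurable, hε0, zero_mul]
  have hint : Integrable (fun ω => ε ω * η ω) μ := integrable_of_sign (hεm.mul hηm) hεη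
  rw [integral_add (integrable_const c) (hint.const_mul d), integral_const_mul, hmean]
  simp

variable [IsProbabilityMeasure μ] (hind : IndepFun ε η μ) (hεm : Measurable ε)
  (hηm : Measurable η) (hε : ∀ ω, ε ω = 1 ∨ ε ω = -1) (hη : ∀ ω, η ω = 1 ∨ η ω = -1)
  (hε0 : ∫ ω, ε ω ∂μ = 0)
include hind hεm hηm hε hη hε0

lemma integral_mul_add_mul_sq (s t : ℝ) :
    ∫ ω, (s * ε ω + t * η ω) ^ 2 ∂μ = s ^ 2 + t ^ 2 := by
  rw [← integral_const_add_mul_mul_of_indepFun hind hεm hηm hε hη hε0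
    (s ^ 2 + t ^ 2) (2 * s * t)]
  congr with ω
  rcases hε ω with h | h <;> rcases hη ω with h' | h' <;> rw [h, h'] <;> ring

lemma integral_mul_add_mul_pow_four (s t : ℝ) :
    ∫ ω, (s * ε ω + t * η ω) ^ 4 ∂μ = s ^ 4 + 6 * s ^ 2 * t ^ 2 + t ^ 4 := by
  rw [← integral_const_add_mul_mul_of_indepFun hind hεm hηm hε hη hε0
    (s ^ 4 + 6 * s ^ 2 * t ^ 2 + t ^ 4) (4 * s * t * (s ^ 2 + t ^ 2))]
  congr with ω
  rcases hε ω with h | h <;> rcases hη ω with h' | h' <;> rw [h, h'] <;> ring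

end Signs

lemma ProbabilityTheory.IndepFun.integral_mul_pow {Ω : Type*} [MeasurableSpace Ω]
    {μ : Measure Ω} {U V : Ω → ℝ} (hUV : IndepFun U V μ) (hU : Measurable U)
    (hV : Measurable V) (k : ℕ) :
    ∫ ω, (U ω * V ω) ^ k ∂μ = (∫ ω, U ω ^ k ∂μ) * ∫ ω, V ω ^ k ∂μ := by
  simp_rw [mul_pow]
  have hUVk := hUV.comp (measurable_id.pow_const k) (measurable_id.pow_const k)
  exact hUVk.integral_mul_eq_mul_integral (hU.pow_const k).aestronglyMeasurable
    (hV.pow_const k).aestronglyMeasurable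

section Cycle

variable {Ω ι : Type*} [MeasurableSpace Ω] {μ : Measure Ω} {X : ι → Ω → ℝ}
  (e : Fin 4 ↪ ι) (s t : ℝ)

lemma integral_cycle_pow (hXmeas : ∀ i, Measurable (X i)) (hindep : iIndepFun X μ) (m : ℕ) :
    ∫ ω, ((s * X (e 1) ω + t * X (e 3) ω) * (X (e 0) ω + X (e 2) ω)) ^ m ∂μ
      = (∫ ω, (s * X (e 1) ω + t * X (e 3) ω) ^ m ∂μ) * ∫ ω, (X (e 0) ω + X (e 2) ω) ^ m ∂μ := by
  have hne {k l : Fin 4} (h : k ≠ l) : e k ≠ e l := e.injective.ne h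
  have hUV : IndepFun (fun ω => s * X (e 1) ω + t * X (e 3) ω)
      (fun ω => X (e 0) ω + X (e 2) ω) μ :=
    (hindep.indepFun_prodMk_prodMk hXmeas (e 1) (e 3) (e 0) (e 2) (hne (by decide))
      (hne (by decide)) (hne (by decide)) (hne (by decide))).comp
      (φ := fun p : ℝ × ℝ => s * p.1 + t * p.2) (ψ := fun p : ℝ × ℝ => p.1 + p.2)
      (by fun_prop) (by fun_prop)
  exact hUV.integral_mul_pow (by fun_prop) (by fun_prop) m

variable [IsProbabilityMeasure μ] (hXmeas : ∀ i, Measurable (X i))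
  (hval : ∀ i ω, X i ω = 1 ∨ X i ω = -1) (hP : ∀ i, μ {ω | X i ω = 1} = 1 / 2)
  (hindep : iIndepFun X μ)
include hXmeas hval hP hindep

lemma integral_cycle_sq :
    ∫ ω, ((s * X (e 1) ω + t * X (e 3) ω) * (X (e 0) ω + X (e 2) ω)) ^ 2 ∂μ
      = 2 * (s ^ 2 + t ^ 2) := by
  have hmean i := integral_eq_zero_of_sign (hXmeas i) (hval i) (hP i)
  have hind {k l : Fin 4} (h : k ≠ l) := hindep.indepFun (e.injective.ne h)
  have hV := integral_mul_add_mul_sq (hind (by decide : (0 : Fin 4) ≠ 2)) (hXmeas _) (hXmeas _)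
    (hval _) (hval _) (hmean _) 1 1
  simp only [one_mul] at hV
  rw [integral_cycle_pow e s t hXmeas hindep, hV, integral_mul_add_mul_sq
    (hind (by decide : (1 : Fin 4) ≠ 3)) (hXmeas _) (hXmeas _) (hval _) (hval _) (hmean _)]
  ring

lemma integral_cycle_pow_four :
    ∫ ω, ((s * X (e 1) ω + t * X (e 3) ω) * (X (e 0) ω + X (e 2) ω)) ^ 4 ∂μ
      = 8 * (s ^ 4 + 6 * s ^ 2 * t ^ 2 + t ^ 4) := by
  have hmean i := integral_eq_zero_of_sign (hXmeas i) (hval i) (hP i)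
  have hind {k l : Fin 4} (h : k ≠ l) := hindep.indepFun (e.injective.ne h)
  have hV := integral_mul_add_mul_pow_four (hind (by decide : (0 : Fin 4) ≠ 2)) (hXmeas _)
    (hXmeas _) (hval _) (hval _) (hmean _) 1 1
  simp only [one_mul] at hV
  rw [integral_cycle_pow e s t hXmeas hindep, hV, integral_mul_add_mul_pow_four
    (hind (by decide : (1 : Fin 4) ≠ 3)) (hXmeas _) (hXmeas _) (hval _) (hval _) (hmean _)]
  ring

end Cycle

lemma Set.finite_range_of_forall_eq_comp {Ω ι α β : Type*} [Finite ι] {X : ι → Ω → α}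
    (hX : ∀ i, (Set.range (X i)).Finite) (g : (ι → α) → β) {F : Ω → β}
    (hF : ∀ ω, F ω = g fun i => X i ω) : (Set.range F).Finite := by
  refine ((Set.Finite.pi hX).image g).subset ?_
  rintro _ ⟨ω, rfl⟩
  exact ⟨fun i => X i ω, by simp, (hF ω).symm⟩

lemma MeasureTheory.Measure.map_ne_gaussianReal_of_finite_range {Ω : Type*}
    [MeasurableSpace Ω] {μ : Measure Ω} [NeZero μ] {F : Ω → ℝ} (hF : Measurable F)
    (hfin : (Set.range F).Finite) (m : ℝ) {v : NNReal} (hv : v ≠ 0) :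
    μ.map F ≠ gaussianReal m v := by
  intro h
  have hnull : gaussianReal m v (Set.range F) = 0 :=
    gaussianReal_absolutelyContinuous m hv (hfin.measure_zero volume)
  rw [← h, Measure.map_apply hF hfin.measurableSet, Set.preimage_range,
    measure_univ_eq_zero] at hnull
  exact NeZero.ne μ hnull

lemma exists_sq_add_sq_and_pow_four : ∃ s t : ℝ, s ^ 2 + t ^ 2 = 1 / 2 ∧
    s ^ 4 + 6 * s ^ 2 * t ^ 2 + t ^ 4 = 3 / 8 := by
  have h2 : √2 ^ 2 = 2 := Real.sq_sqrt zero_le_two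
  have h2le : √2 ≤ 2 := by nlinarith [Real.sqrt_nonneg 2]
  set s := √((2 + √2) / 8)
  set t := √((2 - √2) / 8)
  have hs : s ^ 2 = (2 + √2) / 8 := Real.sq_sqrt (by positivity)
  have ht : t ^ 2 = (2 - √2) / 8 := Real.sq_sqrt (by linarith)
  refine ⟨s, t, by rw [hs, ht]; ring, ?_⟩
  calc s ^ 4 + 6 * s ^ 2 * t ^ 2 + t ^ 4
        = (s ^ 2) ^ 2 + 6 * s ^ 2 * t ^ 2 + (t ^ 2) ^ 2 := by ring
    _ = 3 / 8 := by rw [hs, ht]; linear_combination (-1 / 16) * h2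

/-- For `n ≥ 4` independent symmetric random signs there exist coefficients
`(a_J)` over the 2-element subsets `J ⊆ {1,…,n}` with `Σ a_J² = 1` such that
`F = Σ_J a_J ∏_{i∈J} X_i` satisfies `E[F²]=1`, `E[F⁴]=3`, has finite range, and is not
Gaussian. -/
theorem stmt10 {Ω : Type*} [MeasurableSpace Ω] (μ : Measure Ω) [IsProbabilityMeasure μ]
    (n : ℕ) (hn : 4 ≤ n)
    (X : Fin n → Ω → ℝ) (hXmeas : ∀ i, Measurable (X i))
    (hval : ∀ i ω, X i ω = 1 ∨ X i ω = -1)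
    (hP : ∀ i, μ {ω | X i ω = 1} = 1 / 2)
    (hindep : iIndepFun X μ) :
    ∃ a : Finset (Fin n) → ℝ,
      ∑ J ∈ Finset.powersetCard 2 Finset.univ, a J ^ 2 = 1 ∧
      ∀ F : Ω → ℝ, (∀ ω, F ω = ∑ J ∈ Finset.powersetCard 2 Finset.univ, a J * ∏ i ∈ J, X i ω) →
        (∫ ω, (F ω) ^ 2 ∂μ) = 1 ∧ (∫ ω, (F ω) ^ 4 ∂μ) = 3 ∧
        (Set.range F).Finite ∧ ∀ (m₀ : ℝ) (v : NNReal), v ≠ 0 → μ.map F ≠ gaussianReal m₀ v := by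
  obtain ⟨s, t, hst2, hst4⟩ := exists_sq_add_sq_and_pow_four
  let e := Fin.castLEEmb hn
  refine ⟨cycleCoeff e s t, ?_, fun F hF => ?_⟩
  · rw [sum_powersetCard_two_cycleCoeff_sq]
    linear_combination 2 * hst2
  have hfin : (Set.range F).Finite := Set.finite_range_of_forall_eq_comp
    (fun k => (Set.toFinite {1, -1}).subset (Set.range_subset_iff.2 (hval k)))
    (fun x => ∑ J ∈ powersetCard 2 univ, cycleCoeff e s t J * ∏ k ∈ J, x k) hF
  obtain rfl : F = fun ω => (s * X (e 1) ω + t * X (e 3) ω) * (X (e 0) ω + X (e 2) ω) :=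
    funext fun ω => (hF ω).trans (sum_powersetCard_two_cycleCoeff_mul_prod e s t _)
  refine ⟨?_, ?_, hfin, fun m v hv =>
    Measure.map_ne_gaussianReal_of_finite_range (by fun_prop) hfin m hv⟩
  · rw [integral_cycle_sq e s t hXmeas hval hP hindep]
    linear_combination 2 * hst2
  · rw [integral_cycle_pow_four e s t hXmeas hval hP hindep]
    linear_combination 8 * hst4
end

section
/- Let f:ℕ^m→ℝ be symmetric, square-summable, and vanishing on diagonals (f(i₁,...,i_m)=0 whenever two arguments coincide). Then the squared ℓ² norm of the symmetrized tensor product f⊗̃f restricted to the complement of the diagonal-free set Δ_{2m} satisfies (2m)!·‖(f⊗̃f)·1_{Δ_{2m}^c}‖²_{ℓ²(ℕ^{2m})} ≤ γ_m · m!·‖f‖²_{ℓ²(ℕ^m)} · sup_j Inf_j(f), where γ_m = 2·(2m−1)!·Σ_{r=1}^m r!·C(m,r)² and Inf_j(f) = Σ_{i₂<...<i_m, all ≠ j} f(j,i₂,...,i_m)². -/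
open scoped BigOperators

/-- The symmetrized tensor product `f ⊗̃ f` of a kernel `f` of order `m` with itself:
`(f ⊗̃ f)(x) = (1/(2m)!)·Σ_{σ ∈ S_{2m}} f((x∘σ)₁,…,(x∘σ)_m)·f((x∘σ)_{m+1},…,(x∘σ)_{2m})`. -/
noncomputable def symTensorSelf (m : ℕ) (f : (Fin m → ℕ) → ℝ) : (Fin (m + m) → ℕ) → ℝ :=
  fun x => ((m + m).factorial : ℝ)⁻¹ * ∑ σ : Equiv.Perm (Fin (m + m)),
    f (fun i => x (σ (Fin.castAdd m i))) * f (fun i => x (σ (Fin.natAdd m i)))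

/-- The influence of the variable `j` on a kernel `f` of order `m+1`:
`Inf_j(f) = Σ_{j ∉ {i₂<…<i_{m+1}}} f(j,i₂,…,i_{m+1})²`. -/
noncomputable def influence (m : ℕ) (f : (Fin (m + 1) → ℕ) → ℝ) (j : ℕ) : ℝ :=
  ∑' y : Fin m → ℕ,
    if StrictMono y ∧ ∀ i, y i ≠ j then (f (Fin.cons j y)) ^ 2 else 0

/-!
By Cauchy–Schwarz over the permutations, the symmetrization only decreases the squared norm of
`(f ⊗ f)·1_{Δᶜ}`. If `a` and `b` are injective and their concatenation is not, they share a
value `j = a i`; by symmetry of `f`, the mass `∑ f(b)²` over injective `b` whose range contains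
`j` is at most `m!·Inf_j(f)`, so each `a` contributes at most `f(a)²·m·m!·sup_j Inf_j(f)`.
The resulting constant `(2m)!·m = 2·(2m-1)!·m²` is the `r = 1` term of `γ_m`.
-/

open Function Finset

lemma Summable.ite_zero {β : Type*} {F : β → ℝ} (hF : Summable F) (p : β → Prop)
    [DecidablePred p] : Summable fun x => if p x then F x else 0 :=
  (hF.indicator {x | p x}).congr fun x => by simp [Set.indicator_apply]

section PermAverage

variable {ι α : Type*}

lemma summable_comp_perm_iff {h : (ι → α) → ℝ} (σ : Equiv.Perm ι) :
    Summable (fun x => h (x ∘ σ)) ↔ Summable h :=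
  (σ.symm.arrowCongr (Equiv.refl α)).summable_iff

lemma tsum_comp_perm (h : (ι → α) → ℝ) (σ : Equiv.Perm ι) :
    ∑' x, h (x ∘ σ) = ∑' x, h x :=
  (σ.symm.arrowCongr (Equiv.refl α)).tsum_eq h

variable [Fintype ι] [DecidableEq ι]

lemma tsum_perm_average {h : (ι → α) → ℝ} (hh : Summable h) :
    ∑' x, ((Fintype.card ι).factorial : ℝ)⁻¹ * ∑ σ : Equiv.Perm ι, h (x ∘ σ) = ∑' x, h x := by
  rw [tsum_mul_left, Summable.tsum_finsetSum fun σ _ => (summable_comp_perm_iff σ).2 hh]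
  simp only [tsum_comp_perm, Finset.sum_const, Finset.card_univ, Fintype.card_perm, nsmul_eq_mul]
  field_simp

lemma sq_perm_average_le (g : (ι → α) → ℝ) (x : ι → α) :
    (((Fintype.card ι).factorial : ℝ)⁻¹ * ∑ σ : Equiv.Perm ι, g (x ∘ σ)) ^ 2 ≤
      ((Fintype.card ι).factorial : ℝ)⁻¹ * ∑ σ : Equiv.Perm ι, g (x ∘ σ) ^ 2 := by
  simpa [Fintype.card_perm, div_eq_inv_mul] using
    sum_div_card_sq_le_sum_sq_div_card (s := univ) (f := fun σ : Equiv.Perm ι => g (x ∘ σ))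

lemma tsum_ite_sq_perm_average_le (p : (ι → α) → Prop) [DecidablePred p]
    (hp : ∀ (σ : Equiv.Perm ι) x, p (x ∘ σ) ↔ p x) {g : (ι → α) → ℝ}
    (hg : Summable fun x => g x ^ 2) :
    ∑' x, (if p x then ((Fintype.card ι).factorial : ℝ)⁻¹ * ∑ σ : Equiv.Perm ι, g (x ∘ σ)
      else 0) ^ 2 ≤ ∑' x, if p x then g x ^ 2 else 0 := by
  set h : (ι → α) → ℝ := fun x => if p x then g x ^ 2 else 0
  have hh : Summable h := hg.ite_zero p
  have hh0 : ∀ x, 0 ≤ h x := fun x => by positivity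
  have hpoint : ∀ x, (if p x then ((Fintype.card ι).factorial : ℝ)⁻¹ *
      ∑ σ : Equiv.Perm ι, g (x ∘ σ) else 0) ^ 2 ≤
        ((Fintype.card ι).factorial : ℝ)⁻¹ * ∑ σ : Equiv.Perm ι, h (x ∘ σ) := by
    intro x
    by_cases hx : p x
    · simpa only [h, hx, hp, if_true] using sq_perm_average_le g x
    · rw [if_neg hx, zero_pow two_ne_zero]
      exact mul_nonneg (by positivity) (sum_nonneg fun σ _ => hh0 _)
  have hsum : Summable fun x => ((Fintype.card ι).factorial : ℝ)⁻¹ *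
      ∑ σ : Equiv.Perm ι, h (x ∘ σ) :=
    (summable_sum fun σ _ => (summable_comp_perm_iff σ).2 hh).mul_left _
  calc _ ≤ _ := (hsum.of_nonneg_of_le (fun x => sq_nonneg _) hpoint).tsum_le_tsum hpoint hsum
    _ = ∑' x, h x := tsum_perm_average hh

end PermAverage

def tensorSelf (n : ℕ) (f : (Fin n → ℕ) → ℝ) (x : Fin (n + n) → ℕ) : ℝ :=
  f (fun i => x (Fin.castAdd n i)) * f (fun i => x (Fin.natAdd n i))

lemma symTensorSelf_eq (n : ℕ) (f : (Fin n → ℕ) → ℝ) (x : Fin (n + n) → ℕ) :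
    symTensorSelf n f x =
      ((Fintype.card (Fin (n + n))).factorial : ℝ)⁻¹ *
        ∑ σ : Equiv.Perm (Fin (n + n)), tensorSelf n f (x ∘ σ) := by
  rw [Fintype.card_fin]
  rfl

@[simp]
lemma tensorSelf_append (n : ℕ) (f : (Fin n → ℕ) → ℝ) (a b : Fin n → ℕ) :
    tensorSelf n f (Fin.append a b) = f a * f b := by
  simp only [tensorSelf, Fin.append_left, Fin.append_right]

lemma tsum_tensorSelf_eq_tsum_prod {n : ℕ} (f : (Fin n → ℕ) → ℝ) (F : ℝ → ℝ)
    (p : (Fin (n + n) → ℕ) → Prop) [DecidablePred p] :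
    ∑' x, (if p x then F (tensorSelf n f x) else 0) =
      ∑' q : (Fin n → ℕ) × (Fin n → ℕ),
        if p (Fin.append q.1 q.2) then F (f q.1 * f q.2) else 0 := by
  rw [← (Fin.appendEquiv n n).tsum_eq]
  simp [Fin.appendEquiv]

lemma exists_perm_eq_comp_of_range_eq {ι α : Type*} {b c : ι → α} (hb : Injective b)
    (hc : Injective c) (h : Set.range b = Set.range c) : ∃ σ : Equiv.Perm ι, b = c ∘ σ :=
  ⟨(Equiv.ofInjective b hb).trans ((Equiv.setCongr h).trans (Equiv.ofInjective c hc).symm), by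
    funext i; simp [Equiv.apply_ofInjective_symm]⟩

lemma exists_eq_cons_comp_perm {m : ℕ} {b : Fin (m + 1) → ℕ} (hb : Injective b) {j : ℕ}
    (hj : j ∈ Set.range b) : ∃ (σ : Equiv.Perm (Fin (m + 1))) (y : Fin m → ℕ),
      (StrictMono y ∧ ∀ i, y i ≠ j) ∧ b = Fin.cons j y ∘ σ := by
  set s := (univ.image b).erase j
  have hj' : j ∈ univ.image b := by simpa using hj
  have hs : s.card = m := by simp [s, card_erase_of_mem hj', card_image_of_injective _ hb]
  set y := s.orderEmbOfFin hs
  have hy : ∀ i, y i ≠ j := fun i => ne_of_mem_erase (s.orderEmbOfFin_mem hs i)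
  have hrange : Set.range b = Set.range (Fin.cons j y : Fin (m + 1) → ℕ) := by
    rw [Fin.range_cons, range_orderEmbOfFin, ← coe_insert, insert_erase hj']
    simp
  have hc : Injective (Fin.cons j y : Fin (m + 1) → ℕ) :=
    Fin.cons_injective_iff.2 ⟨by simpa [Set.mem_range] using hy, y.injective⟩
  obtain ⟨σ, hσ⟩ := exists_perm_eq_comp_of_range_eq hb hc hrange
  exact ⟨σ, y, ⟨y.strictMono, hy⟩, hσ⟩

section Influence

variable {m : ℕ} {f : (Fin (m + 1) → ℕ) → ℝ}

lemma summable_influence (hsq : Summable fun x => f x ^ 2) (j : ℕ) :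
    Summable fun y : Fin m → ℕ =>
      if StrictMono y ∧ ∀ i, y i ≠ j then f (Fin.cons j y) ^ 2 else 0 :=
  (hsq.comp_injective (Fin.cons_right_injective (α := fun _ => ℕ) j)).ite_zero
    (fun y => StrictMono y ∧ ∀ i, y i ≠ j)

lemma influence_nonneg (j : ℕ) : 0 ≤ influence m f j :=
  tsum_nonneg fun y => by split_ifs <;> positivity

lemma influence_le_tsum_sq (hsq : Summable fun x => f x ^ 2) (j : ℕ) :
    influence m f j ≤ ∑' x, f x ^ 2 :=
  calc influence m f j ≤ ∑' y : Fin m → ℕ, f (Fin.cons j y) ^ 2 :=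
        (summable_influence hsq j).tsum_le_tsum
          (fun y => by split_ifs <;> [exact le_rfl; positivity])
          (hsq.comp_injective (Fin.cons_right_injective (α := fun _ => ℕ) j))
    _ ≤ ∑' x, f x ^ 2 :=
        tsum_comp_le_tsum_of_inj hsq (fun _ => sq_nonneg _)
          (Fin.cons_right_injective (α := fun _ => ℕ) j)

lemma bddAbove_range_influence (hsq : Summable fun x => f x ^ 2) :
    BddAbove (Set.range (influence m f)) :=
  ⟨_, Set.forall_mem_range.2 (influence_le_tsum_sq hsq)⟩

lemma tsum_ite_mem_range_le_influence
    (hsym : ∀ (σ : Equiv.Perm (Fin (m + 1))) (x : Fin (m + 1) → ℕ), f (x ∘ σ) = f x)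
    (hsq : Summable fun x => f x ^ 2) (j : ℕ) :
    ∑' b : Fin (m + 1) → ℕ, (if Injective b ∧ j ∈ Set.range b then f b ^ 2 else 0) ≤
      (m + 1).factorial * influence m f j := by
  set P : Set (Fin (m + 1) → ℕ) := {b | Injective b ∧ j ∈ Set.range b}
  set g : Equiv.Perm (Fin (m + 1)) × (Fin m → ℕ) → ℝ := fun p =>
    if StrictMono p.2 ∧ ∀ i, p.2 i ≠ j then f (Fin.cons j p.2) ^ 2 else 0
  have hg : Summable g := by
    simpa [g] using
      (Summable.of_finite (f := fun _ : Equiv.Perm (Fin (m + 1)) => (1 : ℝ))).mul_of_nonneg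
        (summable_influence hsq j) (fun _ => zero_le_one) (fun _ => by positivity)
  have htotal : ∑' p, g p = (m + 1).factorial * influence m f j := by
    rw [hg.tsum_prod, tsum_fintype]
    simp [g, influence, Fintype.card_perm]
  choose σ y hy hb using fun b : P => exists_eq_cons_comp_perm b.2.1 b.2.2
  have hinj : Injective fun b : P => (σ b, y b) := fun b b' h => by
    simp only [Prod.mk.injEq] at h
    exact Subtype.ext (by rw [hb b, hb b', h.1, h.2])
  calc ∑' b, (if Injective b ∧ j ∈ Set.range b then f b ^ 2 else 0)
      = ∑' b : P, f b ^ 2 := by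
        rw [tsum_subtype P (fun b => f b ^ 2)]
        simp [Set.indicator_apply, P]
    _ = ∑' b : P, g (σ b, y b) := tsum_congr fun b => by simp [g, hy b, hb b, hsym]
    _ ≤ ∑' p, g p := tsum_comp_le_tsum_of_inj hg (fun _ => by positivity) hinj
    _ = _ := htotal

lemma tsum_ite_not_injective_append_le
    (hsym : ∀ (σ : Equiv.Perm (Fin (m + 1))) (x : Fin (m + 1) → ℕ), f (x ∘ σ) = f x)
    (hsq : Summable fun x => f x ^ 2)
    (hdiag : ∀ x : Fin (m + 1) → ℕ, ¬ Injective x → f x = 0) (a : Fin (m + 1) → ℕ) :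
    ∑' b, (if ¬ Injective (Fin.append a b) then (f a * f b) ^ 2 else 0) ≤
      f a ^ 2 * ((m + 1) * ((m + 1).factorial * ⨆ j, influence m f j)) := by
  set C : ℕ → (Fin (m + 1) → ℕ) → ℝ := fun j b =>
    if Injective b ∧ j ∈ Set.range b then f b ^ 2 else 0
  have hC : ∀ j, Summable (C j) := fun j => hsq.ite_zero _
  have hpoint : ∀ b, (if ¬ Injective (Fin.append a b) then (f a * f b) ^ 2 else 0) ≤
      f a ^ 2 * ∑ i, C (a i) b := by
    intro b
    have hC0 : 0 ≤ ∑ i, C (a i) b := sum_nonneg fun i _ => by positivity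
    by_cases hab : Injective (Fin.append a b)
    · rw [if_neg (not_not_intro hab)]
      positivity
    rw [if_pos hab]
    by_cases hfab : f a = 0 ∨ f b = 0
    · rcases hfab with h | h <;> simp only [h, zero_mul, mul_zero, zero_pow two_ne_zero] <;>
        positivity
    push Not at hfab
    have ha : Injective a := not_imp_comm.1 (hdiag a) hfab.1
    have hb : Injective b := not_imp_comm.1 (hdiag b) hfab.2
    obtain ⟨i, k, hik⟩ : ∃ i k, a i = b k := by
      by_contra! h
      exact hab (Fin.append_injective_iff.2 ⟨ha, hb, h⟩)
    have hCi : C (a i) b = f b ^ 2 := if_pos ⟨hb, k, hik.symm⟩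
    rw [mul_pow, ← hCi]
    gcongr
    exact single_le_sum (f := fun i => C (a i) b) (fun i _ => by positivity) (mem_univ i)
  have hR : Summable fun b => f a ^ 2 * ∑ i, C (a i) b :=
    (summable_sum fun i _ => hC (a i)).mul_left _
  calc ∑' b, (if ¬ Injective (Fin.append a b) then (f a * f b) ^ 2 else 0)
      ≤ ∑' b, f a ^ 2 * ∑ i, C (a i) b :=
        (hR.of_nonneg_of_le (fun b => by split_ifs <;> positivity) hpoint).tsum_le_tsum hpoint hR
    _ = f a ^ 2 * ∑ i, ∑' b, C (a i) b := by
        rw [tsum_mul_left, Summable.tsum_finsetSum fun i _ => hC (a i)]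
    _ ≤ f a ^ 2 * ∑ _i : Fin (m + 1), ((m + 1).factorial * ⨆ j, influence m f j) := by
        gcongr with i
        exact (tsum_ite_mem_range_le_influence hsym hsq (a i)).trans
          (by gcongr; exact le_ciSup (bddAbove_range_influence hsq) (a i))
    _ = _ := by simp

lemma tsum_sq_offDiag_symTensorSelf_le
    (hsym : ∀ (σ : Equiv.Perm (Fin (m + 1))) (x : Fin (m + 1) → ℕ), f (x ∘ σ) = f x)
    (hsq : Summable fun x => f x ^ 2)
    (hdiag : ∀ x : Fin (m + 1) → ℕ, ¬ Injective x → f x = 0) :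
    ∑' x : Fin ((m + 1) + (m + 1)) → ℕ,
        (if ¬ Injective x then symTensorSelf (m + 1) f x else 0) ^ 2 ≤
      (∑' x, f x ^ 2) * ((m + 1) * ((m + 1).factorial * ⨆ j, influence m f j)) := by
  set K : ℝ := (m + 1) * ((m + 1).factorial * ⨆ j, influence m f j)
  have hprod :
      Summable fun q : (Fin (m + 1) → ℕ) × (Fin (m + 1) → ℕ) => (f q.1 * f q.2) ^ 2 := by
    simpa only [mul_pow] using
      hsq.mul_of_nonneg hsq (fun _ => sq_nonneg _) (fun _ => sq_nonneg _)
  have htensor : Summable fun x => tensorSelf (m + 1) f x ^ 2 := by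
    rw [← (Fin.appendEquiv (m + 1) (m + 1)).summable_iff]
    exact hprod.congr fun q => by rw [← tensorSelf_append]; rfl
  have hoff := hprod.ite_zero fun q => ¬ Injective (Fin.append q.1 q.2)
  calc ∑' x : Fin ((m + 1) + (m + 1)) → ℕ,
        (if ¬ Injective x then symTensorSelf (m + 1) f x else 0) ^ 2
      ≤ ∑' x, if ¬ Injective x then tensorSelf (m + 1) f x ^ 2 else 0 := by
        simpa only [symTensorSelf_eq] using tsum_ite_sq_perm_average_le (fun x => ¬ Injective x)
          (fun σ x => by rw [EquivLike.injective_comp]) htensor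
    _ = ∑' q : (Fin (m + 1) → ℕ) × (Fin (m + 1) → ℕ),
          if ¬ Injective (Fin.append q.1 q.2) then (f q.1 * f q.2) ^ 2 else 0 :=
        tsum_tensorSelf_eq_tsum_prod f (· ^ 2) fun x => ¬ Injective x
    _ = ∑' a, ∑' b, if ¬ Injective (Fin.append a b) then (f a * f b) ^ 2 else 0 :=
        hoff.tsum_prod
    _ ≤ ∑' a, f a ^ 2 * K :=
        hoff.prod.tsum_le_tsum (tsum_ite_not_injective_append_le hsym hsq hdiag)
          (hsq.mul_right K)
    _ = (∑' x, f x ^ 2) * K := tsum_mul_right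

end Influence

lemma factorial_two_mul_mul_le (n : ℕ) :
    (2 * n).factorial * n ≤
      2 * (2 * n - 1).factorial * ∑ r ∈ Icc 1 n, r.factorial * n.choose r ^ 2 := by
  rcases n with _ | n
  · simp
  have hfac : (2 * (n + 1)).factorial = 2 * (n + 1) * (2 * (n + 1) - 1).factorial := by
    rw [← Nat.mul_factorial_pred (by omega)]
  have hfirst : (n + 1) ^ 2 ≤ ∑ r ∈ Icc 1 (n + 1), r.factorial * (n + 1).choose r ^ 2 :=
    calc (n + 1) ^ 2 = (1 : ℕ).factorial * (n + 1).choose 1 ^ 2 := by simp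
      _ ≤ _ := single_le_sum (f := fun r => r.factorial * (n + 1).choose r ^ 2)
        (fun _ _ => Nat.zero_le _) (show 1 ∈ Icc 1 (n + 1) by simp)
  rw [hfac]
  nlinarith [Nat.zero_le (2 * (n + 1) - 1).factorial]

/-- For a symmetric square-summable kernel `f` of order `m+1 ≥ 1`
vanishing on diagonals,
`(2(m+1))!·‖(f⊗̃f)·1_{Δᶜ}‖² ≤ γ_{m+1}·(m+1)!·‖f‖²·sup_j Inf_j(f)`, where
`γ_{m+1} = 2·(2(m+1)−1)!·Σ_{r=1}^{m+1} r!·C(m+1,r)²`. -/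
theorem stmt16 (m : ℕ) (f : (Fin (m + 1) → ℕ) → ℝ)
    (hsym : ∀ (σ : Equiv.Perm (Fin (m + 1))) (x : Fin (m + 1) → ℕ), f (x ∘ σ) = f x)
    (hsq : Summable (fun x => f x ^ 2))
    (hdiag : ∀ x : Fin (m + 1) → ℕ, ¬ Function.Injective x → f x = 0) :
    ((2 * (m + 1)).factorial : ℝ) *
        ∑' x : Fin ((m + 1) + (m + 1)) → ℕ,
          (if ¬ Function.Injective x then symTensorSelf (m + 1) f x else 0) ^ 2 ≤
      (2 * ((2 * (m + 1) - 1).factorial : ℝ) *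
          ∑ r ∈ Finset.Icc 1 (m + 1), (r.factorial : ℝ) * ((m + 1).choose r : ℝ) ^ 2) *
        ((m + 1).factorial : ℝ) * (∑' x : Fin (m + 1) → ℕ, f x ^ 2) *
        ⨆ j : ℕ, influence m f j := by
  set Q := ∑' x : Fin (m + 1) → ℕ, f x ^ 2
  set S := ⨆ j : ℕ, influence m f j
  have hQ : 0 ≤ Q := tsum_nonneg fun _ => sq_nonneg _
  have hS : 0 ≤ S := Real.iSup_nonneg influence_nonneg
  have hconst : ((2 * (m + 1)).factorial : ℝ) * (m + 1) ≤
      2 * ((2 * (m + 1) - 1).factorial : ℝ) *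
        ∑ r ∈ Finset.Icc 1 (m + 1), (r.factorial : ℝ) * ((m + 1).choose r : ℝ) ^ 2 := by
    exact_mod_cast factorial_two_mul_mul_le (m + 1)
  calc ((2 * (m + 1)).factorial : ℝ) * ∑' x : Fin ((m + 1) + (m + 1)) → ℕ,
          (if ¬ Function.Injective x then symTensorSelf (m + 1) f x else 0) ^ 2
      ≤ ((2 * (m + 1)).factorial : ℝ) * (Q * ((m + 1) * ((m + 1).factorial * S))) := by
        gcongr
        exact tsum_sq_offDiag_symTensorSelf_le hsym hsq hdiag
    _ = ((2 * (m + 1)).factorial * (m + 1)) * ((m + 1).factorial * Q * S) := by ring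
    _ ≤ (2 * ((2 * (m + 1) - 1).factorial : ℝ) *
          ∑ r ∈ Finset.Icc 1 (m + 1), (r.factorial : ℝ) * ((m + 1).choose r : ℝ) ^ 2) *
          ((m + 1).factorial * Q * S) := by gcongr
    _ = _ := by ring
end
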